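/- arXiv:0912.0169 — 2 statements merged into one kernel-verified Lean document; each statement's English description precedes it below -/
import Mathlib

section
/- Let φ be a 3-form on a 7-dimensional real vector space V of the shape φ = θ ∧ γ_1 + γ_2, where θ is a nonzero 1-form, W = ker θ is a 6-dimensional subspace, γ_1 is a 2-form on V vanishing when restricted appropriately so that γ_1 has rank at most 2 as a 2-form on W (i.e., γ_1 = α ∧ β is decomposable on W), and γ_2 ∈ Λ^3 W*. Then φ is not stable, i.e., the GL(V)-orbit of φ in Λ^3 V* is not open. -/
/-!
STATEMENT 8: A 3-form φ = θ ∧ γ₁ + γ₂ on a 7-dimensional real vector space V, where θ is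
a nonzero 1-form, γ₁ = α ∧ β is decomposable ("length 1") and γ₂ ∈ Λ³W* with W = ker θ
(expressed by ι_v γ₂ = 0 for some v with θ(v) ≠ 0), is not stable: its GL(V)-orbit in
Λ³V* is not open, i.e. φ is linearly equivalent to neither the G₂- nor the G̃₂-model form.
-/

namespace Stmt8

def w (i j k : Fin 7) (x y z : Fin 7 → ℝ) : ℝ :=
  x i * (y j * z k - y k * z j) - x j * (y i * z k - y k * z i) + x k * (y i * z j - y j * z i)

/-- The model definite 3-form of G₂-type on ℝ⁷. -/
def phi (x y z : Fin 7 → ℝ) : ℝ :=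
  w 0 1 2 x y z + w 0 3 4 x y z + w 0 5 6 x y z + w 1 3 5 x y z
    - w 1 4 6 x y z - w 2 3 6 x y z - w 2 4 5 x y z

/-- The model indefinite 3-form of G̃₂-type on ℝ⁷. -/
def phiT (x y z : Fin 7 → ℝ) : ℝ :=
  w 0 1 2 x y z - w 0 3 4 x y z - w 0 5 6 x y z - w 1 3 5 x y z
    + w 1 4 6 x y z + w 2 3 6 x y z + w 2 4 5 x y z

variable {V : Type*} [AddCommGroup V] [Module ℝ V]

/-- A 3-form on a 7-dimensional space is stable iff it is linearly equivalent to one of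
the two model forms (whose orbits are exactly the open GL-orbits). -/
def Stable (f : V → V → V → ℝ) : Prop :=
  ∃ A : V ≃ₗ[ℝ] (Fin 7 → ℝ),
    (∀ x y z, f x y z = phi (A x) (A y) (A z)) ∨
    (∀ x y z, f x y z = phiT (A x) (A y) (A z))


/-!
If `v` spans a complement of `ker θ` and `ι_v γ₂ = 0`, then `ι_v φ = ι_v (θ ∧ α ∧ β)` lies in
`Λ²⟨θ, α, β⟩`, so it is decomposable and `ι_v φ ∧ ι_v φ = 0`. For both model forms, on the
other hand, `ι_u φ ∧ ι_u φ ≠ 0` for every `u ≠ 0`, and this property is invariant under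
linear equivalence.
-/

section Contraction

variable {X Y : Type*}

/-- `θ ∧ α ∧ β`, expanded along `θ`. -/
def wedge3 (θ α β : X → ℝ) (x y z : X) : ℝ :=
  θ x * (α y * β z - α z * β y) - θ y * (α x * β z - α z * β x) + θ z * (α x * β y - α y * β x)

/-- Half of `(g ∧ g)(x, y, z, w)` for a 2-form `g`; it vanishes identically iff `g` has rank
at most 2. -/
def wedgeSq (g : X → X → ℝ) (x y z w : X) : ℝ :=
  g x y * g z w - g x z * g y w + g x w * g y z

theorem wedgeSq_wedge3_eq_zero (θ α β : X → ℝ) (v x y z w : X) :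
    wedgeSq (wedge3 θ α β v) x y z w = 0 := by
  unfold wedgeSq wedge3
  ring

def HasNondegenerateContractions [Zero X] (φ : X → X → X → ℝ) : Prop :=
  ∀ u, (∀ x y z w, wedgeSq (φ u) x y z w = 0) → u = 0

theorem HasNondegenerateContractions.comp_addEquiv [AddZeroClass X] [AddZeroClass Y]
    {φ : Y → Y → Y → ℝ} (hφ : HasNondegenerateContractions φ) (A : X ≃+ Y) :
    HasNondegenerateContractions fun x y z => φ (A x) (A y) (A z) := by
  intro u hu
  refine A.map_eq_zero_iff.mp (hφ (A u) fun x y z w => ?_)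
  simpa [wedgeSq] using hu (A.symm x) (A.symm y) (A.symm z) (A.symm w)

end Contraction

theorem eq_zero_of_sum_sq_nonpos {ι : Type*} [Fintype ι] {u : ι → ℝ}
    (h : ∑ i, u i ^ 2 ≤ 0) : u = 0 := by
  have hsum : ∑ i, u i ^ 2 = 0 := le_antisymm h (Finset.sum_nonneg fun i _ => sq_nonneg (u i))
  funext i
  exact pow_eq_zero_iff two_ne_zero |>.mp <|
    (Finset.sum_eq_zero_iff_of_nonneg fun j _ => sq_nonneg (u j)).mp hsum i (Finset.mem_univ i)

local notation "e" => fun i : Fin 7 => (Pi.single i 1 : Fin 7 → ℝ)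

theorem wedgeSq_phi (u : Fin 7 → ℝ) :
    wedgeSq (phi u) (e 3) (e 4) (e 5) (e 6) = u 0 ^ 2 + u 1 ^ 2 + u 2 ^ 2 ∧
    wedgeSq (phi u) (e 1) (e 2) (e 3) (e 4) = u 0 ^ 2 + u 5 ^ 2 + u 6 ^ 2 ∧
    wedgeSq (phi u) (e 1) (e 2) (e 5) (e 6) = u 0 ^ 2 + u 3 ^ 2 + u 4 ^ 2 := by
  refine ⟨?_, ?_, ?_⟩ <;>
    simp only [wedgeSq, phi, w, Pi.single_apply, Fin.reduceEq, ↓reduceIte] <;> ring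

theorem wedgeSq_phiT (u : Fin 7 → ℝ) :
    wedgeSq (phiT u) (e 3) (e 4) (e 5) (e 6) = u 0 ^ 2 + u 1 ^ 2 + u 2 ^ 2 ∧
    wedgeSq (phiT u) (e 1) (e 2) (e 3) (e 4) = -u 0 ^ 2 + u 5 ^ 2 + u 6 ^ 2 ∧
    wedgeSq (phiT u) (e 1) (e 2) (e 5) (e 6) = -u 0 ^ 2 + u 3 ^ 2 + u 4 ^ 2 := by
  refine ⟨?_, ?_, ?_⟩ <;>
    simp only [wedgeSq, phiT, w, Pi.single_apply, Fin.reduceEq, ↓reduceIte] <;> ring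

theorem phi_hasNondegenerateContractions : HasNondegenerateContractions phi := by
  intro u hu
  obtain ⟨h₁, h₂, h₃⟩ := wedgeSq_phi u
  rw [hu] at h₁ h₂ h₃
  refine eq_zero_of_sum_sq_nonpos ?_
  simp only [Fin.sum_univ_seven]
  linarith [sq_nonneg (u 0)]

theorem phiT_hasNondegenerateContractions : HasNondegenerateContractions phiT := by
  intro u hu
  obtain ⟨h₁, h₂, h₃⟩ := wedgeSq_phiT u
  rw [hu] at h₁ h₂ h₃
  refine eq_zero_of_sum_sq_nonpos ?_
  simp only [Fin.sum_univ_seven]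
  linarith [sq_nonneg (u 1), sq_nonneg (u 2)]

theorem hasNondegenerateContractions_of_stable {f : V → V → V → ℝ} (hf : Stable f) :
    HasNondegenerateContractions f := by
  obtain ⟨A, hA | hA⟩ := hf
  · rw [funext₃ hA]
    exact phi_hasNondegenerateContractions.comp_addEquiv A.toAddEquiv
  · rw [funext₃ hA]
    exact phiT_hasNondegenerateContractions.comp_addEquiv A.toAddEquiv

theorem not_stable_of_decomposable_general
    (θ α β : V →ₗ[ℝ] ℝ)
    (γ₂ : V [⋀^Fin 3]→ₗ[ℝ] ℝ)
    (hγ₂ : ∃ v : V, θ v ≠ 0 ∧ ∀ x y : V, γ₂ ![v, x, y] = 0)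
    (f : V → V → V → ℝ)
    (hf : ∀ x y z, f x y z =
      (θ x * (α y * β z - α z * β y) - θ y * (α x * β z - α z * β x)
        + θ z * (α x * β y - α y * β x)) + γ₂ ![x, y, z]) :
    ¬ Stable f := by
  obtain ⟨v, hθv, hv⟩ := hγ₂
  have hfv : f v = wedge3 θ α β v := by
    funext x y
    rw [hf, hv, add_zero]
    rfl
  intro hstable
  have hv0 : v = 0 := hasNondegenerateContractions_of_stable hstable v fun x y z w => by
    rw [hfv]
    exact wedgeSq_wedge3_eq_zero θ α β v x y z w
  exact hθv (by rw [hv0, map_zero])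

theorem not_stable_of_decomposable
    (hV : Module.finrank ℝ V = 7)
    (θ α β : V →ₗ[ℝ] ℝ) (hθ : θ ≠ 0)
    (γ₂ : V [⋀^Fin 3]→ₗ[ℝ] ℝ)
    (hγ₂ : ∃ v : V, θ v ≠ 0 ∧ ∀ x y : V, γ₂ ![v, x, y] = 0)
    (f : V → V → V → ℝ)
    (hf : ∀ x y z, f x y z =
      (θ x * (α y * β z - α z * β y) - θ y * (α x * β z - α z * β x)
        + θ z * (α x * β y - α y * β x)) + γ₂ ![x, y, z]) :
    ¬ Stable f :=
  not_stable_of_decomposable_general θ α β γ₂ hγ₂ f hf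

end Stmt8
end

section
/- Let Z(Spin(7)) ≅ ℤ/2 denote the center of Spin(7) and consider the subgroup G_2 ⊂ Spin(7) (the stabilizer of a spinor, acting irreducibly on the 8-dimensional real spin representation). Then the normalizer of G_2 in Spin(7) equals G_2 × Z(Spin(7)) = G_2 · ℤ/2. -/
/-!
An element `n` of the normalizer of `G₂ = stabilizer s` maps `s` to a vector whose stabilizer is
`n G₂ n⁻¹ = G₂`, i.e. to a `G₂`-fixed vector. By Schur's lemma that vector lies on the line `ℝ s`,
and since `n` is an isometry it is `± s`. Thus `n` or `z n` fixes `s`, so `n ∈ G₂ ⊔ ⟨z⟩`; conversely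
`z` is central and `z • s = -s ≠ s`.
-/

theorem neg_ne_self_of_ne_zero {K E : Type*} [DivisionRing K] [CharZero K] [AddCommGroup E]
    [Module K E] {v : E} (hv : v ≠ 0) : -v ≠ v := by
  simpa using (smul_left_injective K hv).ne (show (-1 : K) ≠ 1 by norm_num)

theorem eq_one_or_eq_neg_one_of_norm_smul_eq {E : Type*} [NormedAddCommGroup E]
    [NormedSpace ℝ E] {v : E} {r : ℝ} (hv : v ≠ 0) (h : ‖r • v‖ = ‖v‖) : r = 1 ∨ r = -1 := by
  rw [norm_smul, Real.norm_eq_abs, mul_eq_right₀ (norm_ne_zero_iff.mpr hv)] at h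
  exact abs_eq zero_le_one |>.mp h

namespace MulAction

variable {G α : Type*} [Group G] [MulAction G α]

theorem stabilizer_smul_eq_of_mem_normalizer {n : G} {a : α}
    (hn : n ∈ Subgroup.normalizer (stabilizer G a : Set G)) :
    stabilizer G (n • a) = stabilizer G a := by
  rw [stabilizer_smul_eq_stabilizer_map_conj]
  exact Subgroup.mem_normalizer_iff_map_conj_eq.mp hn

theorem mem_stabilizer_sup_zpowers_of_smul_eq_neg [InvolutiveNeg α] {z n : G} {a : α}
    (hz : ∀ b : α, z • b = -b) (hn : n • a = -a) : n ∈ stabilizer G a ⊔ Subgroup.zpowers z := by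
  have hzn : z * n ∈ stabilizer G a := by
    rw [mem_stabilizer_iff, mul_smul, hn, hz, neg_neg]
  rw [← inv_mul_cancel_left z n]
  exact mul_mem (Subgroup.mem_sup_right (inv_mem (Subgroup.mem_zpowers z)))
    (Subgroup.mem_sup_left hzn)

end MulAction

open Module

theorem normalizer_G2_in_Spin7_general {Γ : Type*} [Group Γ] {Δ : Type*} [NormedAddCommGroup Δ]
    [InnerProductSpace ℝ Δ] [MulAction Γ Δ]
    (horth : ∀ (γ : Γ) (v : Δ), ‖γ • v‖ = ‖v‖)
    (s : Δ) (hs : ‖s‖ = 1)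
    (z : Γ) (hzc : z ∈ Subgroup.center Γ) (hz : ∀ v : Δ, z • v = -v)
    (hfix : ∀ v : Δ, (∀ g ∈ MulAction.stabilizer Γ s, g • v = v) → ∃ r : ℝ, v = r • s) :
    Subgroup.normalizer (MulAction.stabilizer Γ s)
        = MulAction.stabilizer Γ s ⊔ Subgroup.zpowers z ∧
      z ∉ MulAction.stabilizer Γ s := by
  have hs0 : s ≠ 0 := norm_ne_zero_iff.mp (hs ▸ one_ne_zero)
  have hzs : z ∉ MulAction.stabilizer Γ s := fun h =>
    neg_ne_self_of_ne_zero (K := ℝ) hs0 ((hz s).symm.trans h)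
  refine ⟨le_antisymm (fun n hn => ?_) (sup_le Subgroup.le_normalizer
    (Subgroup.zpowers_le.mpr (Subgroup.center_le_normalizer _ hzc))), hzs⟩
  obtain ⟨r, hr⟩ := hfix (n • s) fun g hg => by
    rwa [← MulAction.mem_stabilizer_iff, MulAction.stabilizer_smul_eq_of_mem_normalizer hn]
  rcases eq_one_or_eq_neg_one_of_norm_smul_eq hs0 (hr ▸ horth n s) with rfl | rfl
  · exact Subgroup.mem_sup_left (by rwa [one_smul] at hr)
  · exact MulAction.mem_stabilizer_sup_zpowers_of_smul_eq_neg hz (by rwa [neg_one_smul] at hr)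

theorem normalizer_G2_in_Spin7 {Γ : Type*} [Group Γ] {Δ : Type*} [NormedAddCommGroup Δ]
    [InnerProductSpace ℝ Δ] [FiniteDimensional ℝ Δ] [MulAction Γ Δ]
    (hlin : ∀ γ : Γ, IsLinearMap ℝ fun v : Δ => γ • v)
    (horth : ∀ (γ : Γ) (v : Δ), ‖γ • v‖ = ‖v‖)
    (hdim : finrank ℝ Δ = 8)
    (s : Δ) (hs : ‖s‖ = 1)
    (z : Γ) (hzc : z ∈ Subgroup.center Γ) (hz : ∀ v : Δ, z • v = -v)
    (hfix : ∀ v : Δ, (∀ g ∈ MulAction.stabilizer Γ s, g • v = v) → ∃ r : ℝ, v = r • s) :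
    Subgroup.normalizer (MulAction.stabilizer Γ s)
        = MulAction.stabilizer Γ s ⊔ Subgroup.zpowers z ∧
      z ∉ MulAction.stabilizer Γ s :=
  normalizer_G2_in_Spin7_general horth s hs z hzc hz hfix
end
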